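/- arXiv:1803.05416 — 2 statements merged into one kernel-verified Lean document; each statement's English description precedes it below -/
import Mathlib

section
/- Constantin–E–Titi commutator identity: for f, g ∈ L²(Ω) and x at distance greater than ℓ from ∂Ω, the coarse-graining cumulant τ_ℓ(f,g)(x) := (f⊗g)̄_ℓ(x) − f̄_ℓ(x) ⊗ ḡ_ℓ(x) satisfies τ_ℓ(f,g)(x) = ∫ G_ℓ(r) δf(r;x) ⊗ δg(r;x) dr − (∫ G_ℓ(r) δf(r;x) dr) ⊗ (∫ G_ℓ(r) δg(r;x) dr), where δf(r;x) = f(x+r) − f(x). -/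
open MeasureTheory Metric Set

/-! Subtracting constants `a`, `b` from `u`, `v` leaves the weighted covariance
`∫ G u v - (∫ G u)(∫ G v)` unchanged as soon as `∫ G = 1`; the increments `δf(·;x)`, `δg(·;x)`
are `f(x + ·)`, `g(x + ·)` shifted by the constants `f x`, `g x`. -/

section WeightedCovariance

variable {α : Type*} [MeasurableSpace α] {μ : Measure α} {G u v : α → ℝ}

lemma integral_mul_sub_const (hG : Integrable G μ) (hGu : Integrable (fun r => G r * u r) μ)
    (a : ℝ) :
    ∫ r, G r * (u r - a) ∂μ = ∫ r, G r * u r ∂μ - a * ∫ r, G r ∂μ := by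
  simp_rw [mul_sub, mul_comm (G _) a]
  rw [integral_sub hGu (hG.const_mul a), integral_const_mul]

lemma integral_mul_sub_const_mul_sub_const (hG : Integrable G μ)
    (hGu : Integrable (fun r => G r * u r) μ) (hGv : Integrable (fun r => G r * v r) μ)
    (hGuv : Integrable (fun r => G r * (u r * v r)) μ) (a b : ℝ) :
    ∫ r, G r * ((u r - a) * (v r - b)) ∂μ
      = ∫ r, G r * (u r * v r) ∂μ - a * ∫ r, G r * v r ∂μ
        - b * ∫ r, G r * u r ∂μ + a * b * ∫ r, G r ∂μ := by
  have expand : (fun r => G r * ((u r - a) * (v r - b)))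
      = fun r => G r * (u r * v r) - a * (G r * v r) - (b * (G r * u r) - a * b * G r) := by
    funext r; ring
  have hleft : Integrable (fun r => G r * (u r * v r) - a * (G r * v r)) μ :=
    hGuv.sub (hGv.const_mul a)
  have hright : Integrable (fun r => b * (G r * u r) - a * b * G r) μ :=
    (hGu.const_mul b).sub (hG.const_mul (a * b))
  rw [expand, integral_sub hleft hright, integral_sub hGuv (hGv.const_mul a),
    integral_sub (hGu.const_mul b) (hG.const_mul (a * b)), integral_const_mul,
    integral_const_mul, integral_const_mul]
  ring

lemma weightedCovariance_sub_const (hG : Integrable G μ) (hmass : ∫ r, G r ∂μ = 1)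
    (hGu : Integrable (fun r => G r * u r) μ) (hGv : Integrable (fun r => G r * v r) μ)
    (hGuv : Integrable (fun r => G r * (u r * v r)) μ) (a b : ℝ) :
    ∫ r, G r * ((u r - a) * (v r - b)) ∂μ
        - (∫ r, G r * (u r - a) ∂μ) * (∫ r, G r * (v r - b) ∂μ)
      = ∫ r, G r * (u r * v r) ∂μ - (∫ r, G r * u r ∂μ) * (∫ r, G r * v r ∂μ) := by
  rw [integral_mul_sub_const_mul_sub_const hG hGu hGv hGuv, integral_mul_sub_const hG hGu,
    integral_mul_sub_const hG hGv, hmass]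
  ring

end WeightedCovariance

theorem stmt_1_general {d : ℕ}
    (Gℓ : EuclideanSpace ℝ (Fin d) → ℝ)
    (hGmass : ∫ r, Gℓ r = 1)
    (hGint : Integrable Gℓ)
    (f g : EuclideanSpace ℝ (Fin d) → EuclideanSpace ℝ (Fin d))
    (x : EuclideanSpace ℝ (Fin d))
    (i j : Fin d)
    (hint2 : Integrable (fun r => Gℓ r * (f (x + r) i * g (x + r) j)))
    (hintf : Integrable (fun r => Gℓ r * f (x + r) i))
    (hintg : Integrable (fun r => Gℓ r * g (x + r) j)) :
    (∫ r, Gℓ r * (f (x + r) i * g (x + r) j))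
        - (∫ r, Gℓ r * f (x + r) i) * (∫ r, Gℓ r * g (x + r) j)
      = (∫ r, Gℓ r * ((f (x + r) i - f x i) * (g (x + r) j - g x j)))
        - (∫ r, Gℓ r * (f (x + r) i - f x i)) * (∫ r, Gℓ r * (g (x + r) j - g x j)) :=
  (weightedCovariance_sub_const hGint hGmass hintf hintg hint2 (f x i) (g x j)).symm

/-- Constantin–E–Titi commutator identity (componentwise): for
`f, g ∈ L²(Ω)` and `x` at distance greater than `ℓ` from `∂Ω`, the coarse-graining
cumulant `τ_ℓ(f,g)(x) = (f⊗g)̄_ℓ(x) − f̄_ℓ(x) ⊗ ḡ_ℓ(x)` satisfies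
`τ_ℓ(f,g)(x) = ∫ G_ℓ(r) δf(r;x) ⊗ δg(r;x) dr
  − (∫ G_ℓ(r) δf(r;x) dr) ⊗ (∫ G_ℓ(r) δg(r;x) dr)`,
where `δf(r;x) = f(x+r) − f(x)`; the `(i,j)` tensor component is stated. -/
theorem stmt_1 {d : ℕ} (ℓ : ℝ) (hℓ : 0 < ℓ)
    (Ω : Set (EuclideanSpace ℝ (Fin d))) (hΩ : IsOpen Ω)
    (Gℓ : EuclideanSpace ℝ (Fin d) → ℝ)
    (hG0 : ∀ r, 0 ≤ Gℓ r)
    (hGsupp : ∀ r, Gℓ r ≠ 0 → ‖r‖ ≤ ℓ)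
    (hGmass : ∫ r, Gℓ r = 1)
    (hGint : Integrable Gℓ)
    (f g : EuclideanSpace ℝ (Fin d) → EuclideanSpace ℝ (Fin d))
    (hf : MemLp f 2 (volume.restrict Ω)) (hg : MemLp g 2 (volume.restrict Ω))
    (x : EuclideanSpace ℝ (Fin d)) (hx : x ∈ Ω)
    (hdist : ℓ < infDist x (frontier Ω))
    (i j : Fin d)
    (hint2 : Integrable (fun r => Gℓ r * (f (x + r) i * g (x + r) j)))
    (hintf : Integrable (fun r => Gℓ r * f (x + r) i))
    (hintg : Integrable (fun r => Gℓ r * g (x + r) j)) :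
    (∫ r, Gℓ r * (f (x + r) i * g (x + r) j))
        - (∫ r, Gℓ r * f (x + r) i) * (∫ r, Gℓ r * g (x + r) j)
      = (∫ r, Gℓ r * ((f (x + r) i - f x i) * (g (x + r) j - g x j)))
        - (∫ r, Gℓ r * (f (x + r) i - f x i)) * (∫ r, Gℓ r * (g (x + r) j - g x j)) :=
  stmt_1_general Gℓ hGmass hGint f g x i j hint2 hintf hintg
end

section
/- Near-boundary estimate of the stream-function cutoff approximation: let Ω ⊂ ℝ² bounded with C³ boundary, v ∈ C¹([0,T]×Ω̄) divergence-free with v·n̂ = 0 on ∂Ω, and ψ ∈ C([0,T];C²(Ω̄)) a stream function with v = ∇^⊥ψ and ψ = 0 on ∂Ω. Define v^h = ∇^⊥(θ_h ψ) with θ_h(x) = η(d(x)/h). Then |ψ(x,t)| ≤ C h for all x ∈ Ω_h uniformly in t, v^h = θ_h v − η'(d(x)/h) (τ̂(π(x))/h) ψ in Ω_{h(Ω)}, and v^h → v strongly in L^∞(0,T; L²(Ω)) as h → 0. -/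
open MeasureTheory Metric Set Bornology
open scoped RealInnerProductSpace

noncomputable section

/-- The perpendicular gradient `∇^⊥ f = (−∂₂ f, ∂₁ f)` in the plane. -/
def pgrad (f : EuclideanSpace ℝ (Fin 2) → ℝ) (x : EuclideanSpace ℝ (Fin 2)) :
    EuclideanSpace ℝ (Fin 2) :=
  EuclideanSpace.single 0 (-(fderiv ℝ f x (EuclideanSpace.single 1 1)))
    + EuclideanSpace.single 1 (fderiv ℝ f x (EuclideanSpace.single 0 1))


lemma e2_decomp (u : EuclideanSpace ℝ (Fin 2)) :
    u = u 0 • EuclideanSpace.single 0 (1:ℝ) + u 1 • EuclideanSpace.single 1 (1:ℝ) := by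
  ext i
  fin_cases i <;>
    simp [EuclideanSpace.single_apply, PiLp.add_apply, PiLp.smul_apply]

lemma clm_apply_decomp (L : EuclideanSpace ℝ (Fin 2) →L[ℝ] ℝ) (u : EuclideanSpace ℝ (Fin 2)) :
    L u = u 0 * L (EuclideanSpace.single 0 1) + u 1 * L (EuclideanSpace.single 1 1) := by
  conv_lhs => rw [e2_decomp u]
  simp

lemma norm_fderiv_le_norm_pgrad (f : EuclideanSpace ℝ (Fin 2) → ℝ) (x : EuclideanSpace ℝ (Fin 2)) :
    ‖fderiv ℝ f x‖ ≤ ‖pgrad f x‖ := by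
  refine ContinuousLinearMap.opNorm_le_bound _ (norm_nonneg _) fun u => ?_
  set L := fderiv ℝ f x
  set a := L (EuclideanSpace.single 0 1)
  set b := L (EuclideanSpace.single 1 1)
  have h1 : L u = ⟪(EuclideanSpace.single 0 a + EuclideanSpace.single 1 b :
      EuclideanSpace ℝ (Fin 2)), u⟫ := by
    rw [clm_apply_decomp]
    simp [inner_add_left, EuclideanSpace.inner_single_left]
    ring
  have h2 : ‖(EuclideanSpace.single 0 a + EuclideanSpace.single 1 b :
      EuclideanSpace ℝ (Fin 2))‖ = ‖pgrad f x‖ := by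
    rw [EuclideanSpace.norm_eq, EuclideanSpace.norm_eq]
    congr 1
    rw [Fin.sum_univ_two, Fin.sum_univ_two]
    simp [pgrad, EuclideanSpace.single_apply, PiLp.add_apply]
    ring
  rw [h1, ← h2]
  exact abs_real_inner_le_norm _ _

lemma seg_sub_closure {Ω : Set (EuclideanSpace ℝ (Fin 2))} (hΩo : IsOpen Ω)
    {x y : EuclideanSpace ℝ (Fin 2)} (hx : x ∈ Ω) (hy : y ∈ frontier Ω)
    (hxy : dist x y = infDist x (frontier Ω)) :
    segment ℝ x y ⊆ closure Ω := by
  intro z hz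
  by_contra hzc
  have hyc : y ∈ closure Ω := frontier_subset_closure hy
  have hzy : z ≠ y := fun h => hzc (h ▸ hyc)
  have hxf : x ∉ frontier Ω := by
    rw [hΩo.frontier_eq]; exact fun h => h.2 hx
  have hdz : dist x z + dist z y = dist x y := dist_add_dist_of_mem_segment hz
  have hzylt : 0 < dist z y := dist_pos.2 hzy
  have hlt : dist x z < dist x y := by linarith
  have hseg : segment ℝ x z ⊆ Ω ∪ (closure Ω)ᶜ ∨ (segment ℝ x z ∩ frontier Ω).Nonempty := by
    by_cases hne : (segment ℝ x z ∩ frontier Ω).Nonempty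
    · exact Or.inr hne
    · left
      intro p hp
      by_cases hpc : p ∈ closure Ω
      · rcases (closure_eq_self_union_frontier Ω ▸ hpc) with h | h
        · exact Or.inl h
        · exact absurd ⟨hp, h⟩ (fun hh => hne ⟨p, hh⟩)
      · exact Or.inr hpc
  rcases hseg with hsub | ⟨w, hwseg, hwf⟩
  · rcases (convex_segment x z).isPreconnected Ω (closure Ω)ᶜ hΩo
      isClosed_closure.isOpen_compl hsub
      ⟨x, left_mem_segment ℝ x z, hx⟩ ⟨z, right_mem_segment ℝ x z, hzc⟩ with ⟨p, _, hp1, hp2⟩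
    exact hp2 (subset_closure hp1)
  · have h1 : infDist x (frontier Ω) ≤ dist x w := infDist_le_dist_of_mem hwf
    have h2 : dist x w ≤ dist x z := by
      have := dist_add_dist_of_mem_segment hwseg
      have := dist_nonneg (x := w) (y := z)
      linarith
    linarith [hxy ▸ h1]

lemma pgrad_mul_comp {d ψ : EuclideanSpace ℝ (Fin 2) → ℝ} {η : ℝ → ℝ} {h : ℝ}
    {x : EuclideanSpace ℝ (Fin 2)}
    (hd : DifferentiableAt ℝ d x) (hψ : DifferentiableAt ℝ ψ x)
    (hη : Differentiable ℝ η) :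
    pgrad (fun y => η (d y / h) * ψ y) x
      = η (d x / h) • pgrad ψ x + (deriv η (d x / h) / h * ψ x) • pgrad d x := by
  have hdh : HasFDerivAt (fun y => d y / h) (h⁻¹ • fderiv ℝ d x) x := by
    simpa [div_eq_inv_mul, smul_eq_mul, Pi.smul_def] using hd.hasFDerivAt.const_smul (h⁻¹)
  have hθ : HasFDerivAt (fun y => η (d y / h))
      (deriv η (d x / h) • (h⁻¹ • fderiv ℝ d x)) x :=
    ((hη (d x / h)).hasDerivAt).comp_hasFDerivAt x hdh
  have hprod : HasFDerivAt (fun y => η (d y / h) * ψ y)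
      (η (d x / h) • fderiv ℝ ψ x
        + ψ x • (deriv η (d x / h) • (h⁻¹ • fderiv ℝ d x))) x :=
    hθ.mul hψ.hasFDerivAt
  have hfd := hprod.fderiv
  simp only [pgrad, hfd]
  ext i
  fin_cases i <;>
    simp [EuclideanSpace.single_apply, PiLp.add_apply, PiLp.smul_apply,
      ContinuousLinearMap.add_apply, ContinuousLinearMap.smul_apply, smul_eq_mul] <;>
    ring

/-- Near-boundary estimates for the stream-function cutoff
approximation: for `Ω ⊂ ℝ²` bounded with `C³` boundary, `v ∈ C¹` divergence-free with
`v·n̂ = 0` on `∂Ω`, stream function `ψ` (`v = ∇^⊥ψ`, `ψ|_{∂Ω} = 0`), and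
`v^h := ∇^⊥(θ_h ψ)` with `θ_h(x) = η(d(x)/h)`:
(a) `|ψ(x,t)| ≤ C h` on `Ω_h` uniformly in `t`;
(b) `v^h = θ_h v − η'(d(x)/h) (τ̂(π(x))/h) ψ` near the boundary;
(c) `v^h → v` strongly in `L^∞(0,T;L²(Ω))` as `h → 0`. -/
theorem stmt_16 (Ω : Set (EuclideanSpace ℝ (Fin 2)))
    (hΩo : IsOpen Ω) (hΩb : IsBounded Ω) (hΩne : Ω.Nonempty)
    (T : ℝ) (hT : 0 < T) (h₀ : ℝ) (hh₀ : 0 < h₀)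
    (proj tang nor : EuclideanSpace ℝ (Fin 2) → EuclideanSpace ℝ (Fin 2))
    (hproj : ∀ x ∈ {x ∈ Ω | infDist x (frontier Ω) < h₀},
      proj x ∈ frontier Ω ∧ dist x (proj x) = infDist x (frontier Ω))
    (htang : ∀ y ∈ frontier Ω, ‖tang y‖ = 1)
    (hnor : ∀ y ∈ frontier Ω, ‖nor y‖ = 1)
    (hd1 : ∀ x ∈ {x ∈ Ω | infDist x (frontier Ω) < h₀},
      DifferentiableAt ℝ (fun y => infDist y (frontier Ω)) x)
    (hpgd : ∀ x ∈ {x ∈ Ω | infDist x (frontier Ω) < h₀},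
      pgrad (fun y => infDist y (frontier Ω)) x = -tang (proj x))
    (v : ℝ → EuclideanSpace ℝ (Fin 2) → EuclideanSpace ℝ (Fin 2))
    (hvC1 : ContDiff ℝ 1 (fun q : ℝ × EuclideanSpace ℝ (Fin 2) => v q.1 q.2))
    (hdiv : ∀ t ∈ Icc 0 T, ∀ x ∈ Ω,
      (fderiv ℝ (v t) x (EuclideanSpace.single 0 1)) 0
        + (fderiv ℝ (v t) x (EuclideanSpace.single 1 1)) 1 = 0)
    (hvn : ∀ t ∈ Icc 0 T, ∀ y ∈ frontier Ω, ⟪nor y, v t y⟫ = 0)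
    (ψ : ℝ → EuclideanSpace ℝ (Fin 2) → ℝ)
    (hψc : Continuous (fun q : ℝ × EuclideanSpace ℝ (Fin 2) => ψ q.1 q.2))
    (hψ2 : ∀ t ∈ Icc 0 T, ContDiff ℝ 2 (ψ t))
    (hψ0 : ∀ t ∈ Icc 0 T, ∀ y ∈ frontier Ω, ψ t y = 0)
    (hvψ : ∀ t ∈ Icc 0 T, ∀ x ∈ closure Ω, v t x = pgrad (ψ t) x)
    (η : ℝ → ℝ) (hηsm : ContDiff ℝ (⊤ : ℕ∞) η) (hηmono : Monotone η)
    (hη01 : ∀ s, η s ∈ Icc (0:ℝ) 1)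
    (hη0 : ∀ s, s ≤ 1/2 → η s = 0) (hη1 : ∀ s, 1 ≤ s → η s = 1) :
    -- (a)
    (∃ C : ℝ, 0 < C ∧ ∀ h : ℝ, 0 < h → h < h₀ → ∀ t ∈ Icc 0 T,
      ∀ x ∈ {x ∈ Ω | infDist x (frontier Ω) < h}, |ψ t x| ≤ C * h) ∧
    -- (b)
    (∀ h : ℝ, 0 < h → h < h₀ → ∀ t ∈ Icc 0 T,
      ∀ x ∈ {x ∈ Ω | infDist x (frontier Ω) < h₀},
        pgrad (fun y => η (infDist y (frontier Ω) / h) * ψ t y) x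
          = η (infDist x (frontier Ω) / h) • v t x
            - (deriv η (infDist x (frontier Ω) / h) * (ψ t x / h)) • tang (proj x)) ∧
    -- (c)
    (∀ ε : ℝ, 0 < ε → ∃ h₁ : ℝ, 0 < h₁ ∧ ∀ h : ℝ, 0 < h → h < h₁ → ∀ t ∈ Icc 0 T,
      (∫ x in Ω,
        ‖pgrad (fun y => η (infDist y (frontier Ω) / h) * ψ t y) x - v t x‖ ^ 2)
        ≤ ε ^ 2) := by
  classical
  set d : EuclideanSpace ℝ (Fin 2) → ℝ := fun y => infDist y (frontier Ω) with hd_def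
  have hfne : (frontier Ω).Nonempty := by
    rw [nonempty_frontier_iff]
    exact ⟨hΩne, fun h => NormedSpace.unbounded_univ ℝ _ (h ▸ hΩb)⟩
  have hKcpt : IsCompact (closure Ω) := hΩb.isCompact_closure
  obtain ⟨M₀, hM₀⟩ := (isCompact_Icc.prod hKcpt).exists_bound_of_continuousOn
    (f := fun q : ℝ × EuclideanSpace ℝ (Fin 2) => v q.1 q.2)
    (hvC1.continuous.continuousOn)
  set M := max M₀ 0 with hM_def
  have hM0 : 0 ≤ M := le_max_right _ _
  have hvM : ∀ t ∈ Icc (0:ℝ) T, ∀ z ∈ closure Ω, ‖v t z‖ ≤ M := fun t ht z hz =>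
    le_trans (hM₀ (t, z) ⟨ht, hz⟩) (le_max_left _ _)
  -- key estimate for (a)
  have key_a : ∀ t ∈ Icc (0:ℝ) T, ∀ x ∈ Ω, |ψ t x| ≤ M * d x := by
    intro t ht x hx
    obtain ⟨y, hy, hxy⟩ := isClosed_frontier.exists_infDist_eq_dist hfne x
    have hseg : segment ℝ x y ⊆ closure Ω := seg_sub_closure hΩo hx hy hxy.symm
    have hbd : ∀ z ∈ segment ℝ x y, ‖fderiv ℝ (ψ t) z‖ ≤ M := by
      intro z hz
      refine le_trans (norm_fderiv_le_norm_pgrad _ _) ?_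
      rw [← hvψ t ht z (hseg hz)]
      exact hvM t ht z (hseg hz)
    have hmv : ‖ψ t x - ψ t y‖ ≤ M * ‖x - y‖ :=
      Convex.norm_image_sub_le_of_norm_fderiv_le
        (fun z _ => ((hψ2 t ht).differentiable (by norm_num)).differentiableAt)
        hbd (convex_segment x y) (right_mem_segment ℝ x y) (left_mem_segment ℝ x y)
    rw [hψ0 t ht y hy, sub_zero, Real.norm_eq_abs] at hmv
    calc |ψ t x| ≤ M * ‖x - y‖ := hmv
      _ = M * d x := by rw [← dist_eq_norm]; simp only [hd_def]; rw [hxy]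
  set C := M + 1 with hC_def
  have hCpos : 0 < C := by positivity
  have part_a : ∀ h : ℝ, 0 < h → h < h₀ → ∀ t ∈ Icc (0:ℝ) T,
      ∀ x ∈ {x ∈ Ω | d x < h}, |ψ t x| ≤ C * h := by
    intro h hh _ t ht x hx
    have h1 := key_a t ht x hx.1
    have h2 : M * d x ≤ M * h := mul_le_mul_of_nonneg_left hx.2.le hM0
    have := infDist_nonneg (s := frontier Ω) (x := x)
    nlinarith
  -- part (b)
  have hηd : Differentiable ℝ η := hηsm.differentiable (by simp)
  have part_b : ∀ h : ℝ, 0 < h → ∀ t ∈ Icc (0:ℝ) T,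
      ∀ x ∈ {x ∈ Ω | d x < h₀},
        pgrad (fun y => η (d y / h) * ψ t y) x
          = η (d x / h) • v t x
            - (deriv η (d x / h) * (ψ t x / h)) • tang (proj x) := by
    intro h hh t ht x hx
    have hdiffψ : DifferentiableAt ℝ (ψ t) x :=
      ((hψ2 t ht).differentiable (by norm_num)).differentiableAt
    rw [pgrad_mul_comp (hd1 x hx) hdiffψ hηd, hpgd x hx,
      ← hvψ t ht x (subset_closure hx.1)]
    rw [smul_neg, show (deriv η (d x / h) / h * ψ t x) = deriv η (d x / h) * (ψ t x / h)
      from by ring, ← sub_eq_add_neg]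
  -- deriv η vanishes on [1, ∞)
  have hη'0 : ∀ s : ℝ, 1 ≤ s → deriv η s = 0 := by
    intro s hs
    rcases hs.eq_or_lt with heq | hlt
    · subst heq
      exact IsLocalMax.deriv_eq_zero
        (Filter.Eventually.of_forall fun y => by
          rw [hη1 1 le_rfl]; exact (hη01 y).2)
    · have hev : η =ᶠ[nhds s] fun _ => 1 := by
        filter_upwards [lt_mem_nhds hlt] with y hy using hη1 y hy.le
      rw [hev.deriv_eq, deriv_const]
  -- bound on deriv η
  obtain ⟨K₀, hK₀⟩ := isCompact_Icc.exists_bound_of_continuousOn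
    (f := deriv η) (s := Icc (0:ℝ) 1) (hηsm.continuous_deriv (by simp)).continuousOn
  set Kη := max K₀ 0 with hK_def
  have hKη0 : 0 ≤ Kη := le_max_right _ _
  have hKη : ∀ s ∈ Icc (0:ℝ) 1, |deriv η s| ≤ Kη := fun s hs =>
    le_trans (hK₀ s hs) (le_max_left _ _)
  refine ⟨⟨C, hCpos, part_a⟩, fun h hh hh' t ht x hx => part_b h hh t ht x hx, ?_⟩
  -- part (c)
  intro ε hε
  set B := (M + Kη * C) ^ 2 with hB_def
  have hB0 : 0 ≤ B := sq_nonneg _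
  set S : ℕ → Set (EuclideanSpace ℝ (Fin 2)) :=
    fun n => Ω ∩ {x | d x < 1 / (n + 1)} with hS_def
  have hSopen : ∀ n, IsOpen (S n) :=
    fun n => hΩo.inter (isOpen_lt (continuous_infDist_pt _) continuous_const)
  have hanti : Antitone S := by
    intro m n hmn x hx
    simp only [hS_def, mem_inter_iff, mem_setOf_eq] at hx ⊢
    refine ⟨hx.1, lt_of_lt_of_le hx.2 ?_⟩
    apply one_div_le_one_div_of_le
    · positivity
    · have : (m : ℝ) ≤ n := Nat.cast_le.2 hmn
      linarith
  have hInter : ⋂ n, S n = ∅ := by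
    rw [eq_empty_iff_forall_notMem]
    intro x hx
    have hx0 := mem_iInter.1 hx 0
    have hd0 : 0 < d x := by
      rw [hd_def]
      refine (isClosed_frontier.notMem_iff_infDist_pos hfne).1 ?_
      rw [hΩo.frontier_eq]
      exact fun hc => hc.2 hx0.1
    obtain ⟨n, hn⟩ := exists_nat_one_div_lt hd0
    exact absurd (mem_iInter.1 hx n).2 (not_lt.2 hn.le)
  have hfin : ∀ n, volume (S n) ≠ ⊤ :=
    fun n => ((hΩb.subset (inter_subset_left)).measure_lt_top).ne
  have htend := tendsto_measure_iInter_atTop (μ := volume)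
    (fun n => (hSopen n).measurableSet.nullMeasurableSet) hanti ⟨0, hfin 0⟩
  rw [hInter, measure_empty] at htend
  have hδpos : (0 : ENNReal) < ENNReal.ofReal (ε ^ 2 / (B + 1)) := by
    rw [ENNReal.ofReal_pos]; positivity
  obtain ⟨n, hn⟩ := (htend.eventually (gt_mem_nhds hδpos)).exists
  refine ⟨min h₀ (1 / (n + 1)), by positivity, ?_⟩
  intro h hh hlt t ht
  have hhh₀ : h < h₀ := lt_of_lt_of_le hlt (min_le_left _ _)
  -- pointwise bound
  have hbnd : ∀ x ∈ Ω,
      ‖pgrad (fun y => η (d y / h) * ψ t y) x - v t x‖ ^ 2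
        ≤ ({y | d y < h}).indicator (fun _ => B) x := by
    intro x hxΩ
    by_cases hcase : d x < h
    · rw [Set.indicator_of_mem (show x ∈ {y | d y < h} from hcase) (fun _ => B)]
      have hxh₀ : d x < h₀ := hcase.trans hhh₀
      rw [part_b h hh t ht x ⟨hxΩ, hxh₀⟩]
      set θ := η (d x / h) with hθ_def
      set k := deriv η (d x / h) * (ψ t x / h) with hk_def
      have hre : θ • v t x - k • tang (proj x) - v t x
          = (θ • v t x - v t x) - k • tang (proj x) := by abel
      rw [hre]
      have hvb : ‖v t x‖ ≤ M := hvM t ht x (subset_closure hxΩ)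
      have hθmem := hη01 (d x / h)
      have hb1 : ‖θ • v t x - v t x‖ ≤ M := by
        have : θ • v t x - v t x = (θ - 1) • v t x := by
          rw [sub_smul, one_smul]
        rw [this, norm_smul, Real.norm_eq_abs]
        have h1 : |θ - 1| ≤ 1 := by
          rw [abs_le]; constructor <;> [linarith [hθmem.1]; linarith [hθmem.2]]
        calc |θ - 1| * ‖v t x‖ ≤ 1 * M :=
            mul_le_mul h1 hvb (norm_nonneg _) zero_le_one
          _ = M := one_mul M
      have hb2 : ‖k • tang (proj x)‖ ≤ Kη * C := by
        rw [norm_smul, Real.norm_eq_abs,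
          htang (proj x) (hproj x ⟨hxΩ, hxh₀⟩).1, mul_one, hk_def, abs_mul]
        have hd01 : d x / h ∈ Icc (0:ℝ) 1 :=
          ⟨div_nonneg infDist_nonneg hh.le, (div_le_one hh).2 hcase.le⟩
        have hψb : |ψ t x| ≤ C * h := part_a h hh hhh₀ t ht x ⟨hxΩ, hcase⟩
        have hψh : |ψ t x / h| ≤ C := by
          rw [abs_div, abs_of_pos hh, div_le_iff₀ hh]
          exact hψb
        exact mul_le_mul (hKη _ hd01) hψh (abs_nonneg _) hKη0
      have htot : ‖(θ • v t x - v t x) - k • tang (proj x)‖ ≤ M + Kη * C :=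
        le_trans (norm_sub_le _ _) (add_le_add hb1 hb2)
      calc ‖(θ • v t x - v t x) - k • tang (proj x)‖ ^ 2 ≤ (M + Kη * C) ^ 2 :=
          pow_le_pow_left₀ (norm_nonneg _) htot 2
        _ = B := hB_def.symm
    · rw [Set.indicator_of_notMem (show x ∉ {y | d y < h} from hcase) (fun _ => B)]
      rcases (not_lt.1 hcase).eq_or_lt with heq | hgt
      · have hxh₀ : d x < h₀ := by rw [← heq]; exact hhh₀
        rw [part_b h hh t ht x ⟨hxΩ, hxh₀⟩]
        have hd1' : d x / h = 1 := by rw [← heq]; field_simp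
        rw [hd1', hη1 1 le_rfl, hη'0 1 le_rfl, one_smul, zero_mul, zero_smul,
          sub_zero, sub_self]
        simp
      · have hU : {y | h < d y} ∈ nhds x :=
          (isOpen_lt continuous_const (continuous_infDist_pt _)).mem_nhds hgt
        have hev : (fun y => η (d y / h) * ψ t y) =ᶠ[nhds x] ψ t := by
          filter_upwards [hU] with y hy
          rw [hη1 _ ((le_div_iff₀ hh).2 (by simpa using hy.le)), one_mul]
        have hfd : fderiv ℝ (fun y => η (d y / h) * ψ t y) x = fderiv ℝ (ψ t) x :=
          hev.fderiv_eq
        have hpg : pgrad (fun y => η (d y / h) * ψ t y) x = pgrad (ψ t) x := by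
          simp only [pgrad, hfd]
        rw [hpg, ← hvψ t ht x (subset_closure hxΩ), sub_self]
        simp
  -- integral bound
  have hShmeas : MeasurableSet {y | d y < h} :=
    (isOpen_lt (continuous_infDist_pt _) continuous_const).measurableSet
  have hint : Integrable (({y | d y < h}).indicator (fun _ => B))
      (volume.restrict Ω) := by
    rw [integrable_indicator_iff hShmeas]
    refine integrableOn_const (ne_of_lt ?_)
    refine lt_of_le_of_lt ?_ (hΩb.measure_lt_top : volume Ω < ⊤)
    rw [Measure.restrict_apply hShmeas]
    exact measure_mono inter_subset_right
  calc (∫ x in Ω, ‖pgrad (fun y => η (d y / h) * ψ t y) x - v t x‖ ^ 2)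
      ≤ ∫ x in Ω, ({y | d y < h}).indicator (fun _ => B) x := by
        refine integral_mono_of_nonneg (Filter.Eventually.of_forall fun x => sq_nonneg _)
          hint ?_
        rw [Filter.EventuallyLE, ae_restrict_iff' hΩo.measurableSet]
        exact Filter.Eventually.of_forall hbnd
    _ = (volume ({y | d y < h} ∩ Ω)).toReal * B := by
        rw [integral_indicator_const _ hShmeas, measureReal_def, Measure.restrict_apply hShmeas,
          smul_eq_mul]
    _ ≤ (volume (S n)).toReal * B := by
        refine mul_le_mul_of_nonneg_right (ENNReal.toReal_le_toReal ?_ (hfin n) |>.2 ?_) hB0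
        · exact ((measure_mono (inter_subset_right)).trans_lt hΩb.measure_lt_top).ne
        · refine measure_mono fun x hx => ⟨hx.2, ?_⟩
          exact lt_of_lt_of_le hx.1 (le_trans hlt.le (min_le_right _ _))
    _ ≤ ε ^ 2 := by
        have h1 : (volume (S n)).toReal < ε ^ 2 / (B + 1) := by
          rw [← ENNReal.lt_ofReal_iff_toReal_lt (hfin n)]
          exact hn
        have h2 : (volume (S n)).toReal ≥ 0 := ENNReal.toReal_nonneg
        have h3 : ε ^ 2 / (B + 1) * B ≤ ε ^ 2 := by
          rw [div_mul_eq_mul_div, div_le_iff₀ (by positivity)]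
          nlinarith [sq_nonneg ε]
        nlinarith
end
end
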